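/- Let d ∈ (0,1), α > −d, k ≥ 1, B a nonnegative integer, and a > d a real number. Then ∑_{b=1}^{∞} ( (α/d + B)_{(b)} / ( (a+α)/d + B )_{(b)} ) converges and equals (α + dB)/(a − d). -/

import Mathlib

open MeasureTheory Finset

/-- Rising factorial `(x)_{(n)} = ∏_{j=0}^{n-1} (x+j)`. -/
noncomputable def risingFactorial (x : ℝ) (n : ℕ) : ℝ := ∏ j ∈ Finset.range n, (x + j)

/-- Beta function `B(a,b) = Γ(a)Γ(b)/Γ(a+b)`. -/
noncomputable def betaFn (a b : ℝ) : ℝ := Real.Gamma a * Real.Gamma b / Real.Gamma (a + b)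

/-- The partition of `{1,…,n}` induced by an allocation vector `z ∈ (ℕ₊)ⁿ`:
its blocks are the nonempty level sets `{i : z_i = j}`. -/
def Cz {n : ℕ} (z : Fin n → ℕ+) : Finset (Finset (Fin n)) :=
  Finset.image (fun i => Finset.univ.filter fun i' => z i' = z i) Finset.univ

/-- `m(z) = max {z₁,…,zₙ}`. -/
def mz {n : ℕ} (z : Fin n → ℕ+) : ℕ := Finset.univ.sup fun i => (z i : ℕ)

/-- `g_j(z) = #{i : z_i ≥ j}`. -/
def gz {n : ℕ} (z : Fin n → ℕ+) (j : ℕ) : ℕ :=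
  (Finset.univ.filter fun i => j ≤ (z i : ℕ)).card

/-- Access the `j`-th coordinate (1-indexed) of a vector `v : Fin m → ℝ`. -/
noncomputable def stk {m : ℕ} (v : Fin m → ℝ) (j : ℕ) : ℝ :=
  if h : j - 1 < m then v ⟨j - 1, h⟩ else 0

/-- `C` is a partition of `{1,…,n}`: all blocks are nonempty and every element
belongs to exactly one block. -/
def IsPartition {n : ℕ} (C : Finset (Finset (Fin n))) : Prop :=
  (∀ c ∈ C, c.Nonempty) ∧ ∀ i : Fin n, ∃! c, c ∈ C ∧ i ∈ c

/-!
Write `x = α/d + B > -1` and `δ = a/d - 1 > 0`, so that the denominator parameter is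
`x + 1 + δ`. Since `(x)_{(n+1)} = x · (x+1)_{(n)}`, it suffices to show that
`∑_{n ≥ 0} (c)_{(n)} / (c+δ)_{(n+1)} = 1/δ` for `c > 0`. These terms are nonnegative and
telescope: `δ · (c)_{(n)} / (c+δ)_{(n+1)} = V n - V (n+1)` with `V n = (c)_{(n)} / (c+δ)_{(n)}`,
and `V n → 0` because, by Bernoulli's inequality, each factor `(c+j)/(c+δ+j)` is at most
`((c+j)/(c+j+1))^ε` for `ε = min δ 1`, whence `V n ≤ (c/(c+n))^ε`.
-/

open Filter Topology

lemma risingFactorial_succ (x : ℝ) (n : ℕ) :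
    risingFactorial x (n + 1) = risingFactorial x n * (x + n) :=
  prod_range_succ _ _

lemma risingFactorial_succ' (x : ℝ) (n : ℕ) :
    risingFactorial x (n + 1) = x * risingFactorial (x + 1) n := by
  rw [risingFactorial, prod_range_succ', risingFactorial, mul_comm]
  push_cast
  simp only [add_zero, add_assoc, add_comm (1 : ℝ)]

lemma risingFactorial_pos {x : ℝ} (hx : 0 < x) (n : ℕ) : 0 < risingFactorial x n :=
  prod_pos fun j _ => by positivity

lemma risingFactorial_div_risingFactorial_add_one {c : ℝ} (hc : 0 < c) (n : ℕ) :
    risingFactorial c n / risingFactorial (c + 1) n = c / (c + n) := by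
  have h := (risingFactorial_succ c n).symm.trans (risingFactorial_succ' c n)
  have := risingFactorial_pos (x := c + 1) (by linarith) n
  rw [div_eq_div_iff this.ne' (by positivity)]
  linarith

lemma risingFactorial_div_sub_div_succ {y : ℝ} (hy : 0 < y) (x : ℝ) (n : ℕ) :
    risingFactorial x n / risingFactorial y n -
        risingFactorial x (n + 1) / risingFactorial y (n + 1) =
      (y - x) * (risingFactorial x n / risingFactorial y (n + 1)) := by
  have := (risingFactorial_pos hy n).ne'
  have : y + n ≠ 0 := by positivity
  rw [risingFactorial_succ x, risingFactorial_succ y]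
  field_simp
  ring

/-- Bernoulli's inequality `(1 + 1/A)^ε ≤ 1 + ε/A`, inverted. -/
lemma div_add_le_div_add_one_rpow {A ε : ℝ} (hA : 0 < A) (hε : 0 ≤ ε) (hε1 : ε ≤ 1) :
    A / (A + ε) ≤ (A / (A + 1)) ^ ε := by
  have hBernoulli : (1 + A⁻¹) ^ ε ≤ 1 + ε * A⁻¹ :=
    rpow_one_add_le_one_add_mul_self (by linarith [inv_pos.2 hA]) hε hε1
  calc A / (A + ε) = (1 + ε * A⁻¹)⁻¹ := by field_simp
    _ ≤ ((1 + A⁻¹) ^ ε)⁻¹ := inv_anti₀ (by positivity) hBernoulli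
    _ = (A / (A + 1)) ^ ε := by
      rw [← Real.inv_rpow (by positivity)]
      congr 1
      field_simp

lemma risingFactorial_div_risingFactorial_add_le_rpow {c δ ε : ℝ} (hc : 0 < c) (hε : 0 ≤ ε)
    (hε1 : ε ≤ 1) (hεδ : ε ≤ δ) (n : ℕ) :
    risingFactorial c n / risingFactorial (c + δ) n ≤ (c / (c + n)) ^ ε := by
  have hfactor : ∀ j ∈ range n, (c + j) / (c + δ + j) ≤ ((c + j) / (c + 1 + j)) ^ ε := by
    intro j _
    calc (c + j) / (c + δ + j) ≤ (c + j) / (c + j + ε) :=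
          div_le_div_of_nonneg_left (by positivity) (by positivity) (by linarith)
      _ ≤ ((c + j) / (c + j + 1)) ^ ε := div_add_le_div_add_one_rpow (by positivity) hε hε1
      _ = ((c + j) / (c + 1 + j)) ^ ε := by ring_nf
  calc risingFactorial c n / risingFactorial (c + δ) n
        = ∏ j ∈ range n, (c + j) / (c + δ + j) := (prod_div_distrib _ _).symm
    _ ≤ ∏ j ∈ range n, ((c + j) / (c + 1 + j)) ^ ε :=
        prod_le_prod (fun j _ => div_nonneg (by positivity) (by linarith [j.cast_nonneg (α := ℝ)]))
          hfactor
    _ = (risingFactorial c n / risingFactorial (c + 1) n) ^ ε := by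
        rw [risingFactorial, risingFactorial, ← prod_div_distrib,
          Real.finsetProd_rpow _ _ (fun j _ => by positivity)]
    _ = (c / (c + n)) ^ ε := by rw [risingFactorial_div_risingFactorial_add_one hc]

lemma tendsto_risingFactorial_div_risingFactorial_add {c δ : ℝ} (hc : 0 < c) (hδ : 0 < δ) :
    Tendsto (fun n : ℕ => risingFactorial c n / risingFactorial (c + δ) n) atTop (𝓝 0) := by
  set ε := min δ 1
  have hε : 0 < ε := lt_min hδ one_pos
  have hbound : Tendsto (fun n : ℕ => (c / (c + n)) ^ ε) atTop (𝓝 0) := by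
    have hbase : Tendsto (fun n : ℕ => c / (c + n)) atTop (𝓝 0) :=
      tendsto_const_nhds.div_atTop (tendsto_atTop_add_const_left _ _ tendsto_natCast_atTop_atTop)
    have hrpow := (Real.continuousAt_rpow_const 0 ε (Or.inr hε.le)).tendsto
    rw [Real.zero_rpow hε.ne'] at hrpow
    exact hrpow.comp hbase
  refine squeeze_zero (fun n => ?_) (fun n => ?_) hbound
  · exact div_nonneg (risingFactorial_pos hc n).le (risingFactorial_pos (by positivity) n).le
  · exact risingFactorial_div_risingFactorial_add_le_rpow hc hε.le (min_le_right _ _)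
      (min_le_left _ _) n

theorem hasSum_risingFactorial_div_risingFactorial_add_succ {c δ : ℝ} (hc : 0 < c)
    (hδ : 0 < δ) :
    HasSum (fun n : ℕ => risingFactorial c n / risingFactorial (c + δ) (n + 1)) δ⁻¹ := by
  set V : ℕ → ℝ := fun n => risingFactorial c n / risingFactorial (c + δ) n
  have hpartial : ∀ n, ∑ i ∈ range n, risingFactorial c i / risingFactorial (c + δ) (i + 1) =
      δ⁻¹ * (1 - V n) := by
    intro n
    have htelescope : ∀ i, risingFactorial c i / risingFactorial (c + δ) (i + 1) =
        δ⁻¹ * (V i - V (i + 1)) := fun i => by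
      rw [risingFactorial_div_sub_div_succ (by positivity), add_sub_cancel_left,
        inv_mul_cancel_left₀ hδ.ne']
    rw [sum_congr rfl fun i _ => htelescope i, ← mul_sum, sum_range_sub']
    simp [V, risingFactorial]
  rw [hasSum_iff_tendsto_nat_of_nonneg
    (fun n => div_nonneg (risingFactorial_pos hc n).le (risingFactorial_pos (by positivity) _).le)]
  simpa [hpartial] using
    ((tendsto_risingFactorial_div_risingFactorial_add hc hδ).const_sub 1).const_mul δ⁻¹

theorem hasSum_pnat_risingFactorial_div {x δ : ℝ} (hx : -1 < x) (hδ : 0 < δ) :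
    HasSum (fun b : ℕ+ => risingFactorial x b / risingFactorial (x + 1 + δ) b) (x / δ) := by
  rw [hasSum_pnat_iff_hasSum_succ (f := fun n => risingFactorial x n /
    risingFactorial (x + 1 + δ) n)]
  simp only [risingFactorial_succ' x, mul_div_assoc, div_eq_mul_inv x]
  exact (hasSum_risingFactorial_div_risingFactorial_add_succ (by linarith) hδ).mul_left x

theorem sum_risingFactorial_ratio_init_general (d α : ℝ) (hd : d ∈ Set.Ioo (0 : ℝ) 1)
    (hα : -d < α) (B : ℕ) (a : ℝ) (ha : d < a) :
    HasSum
      (fun b : ℕ+ =>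
        risingFactorial (α / d + (B : ℝ)) (b : ℕ) /
          risingFactorial ((a + α) / d + (B : ℝ)) (b : ℕ))
      ((α + d * (B : ℝ)) / (a - d)) := by
  have hd0 : 0 < d := hd.1
  have hx : -1 < α / d + B := by
    have : -1 < α / d := by rw [lt_div_iff₀ hd0]; linarith
    linarith [B.cast_nonneg (α := ℝ)]
  have hδ : 0 < a / d - 1 := by rw [sub_pos, one_lt_div hd0]; exact ha
  have hden : (a + α) / d + B = α / d + B + 1 + (a / d - 1) := by ring
  have hval : (α / d + B) / (a / d - 1) = (α + d * B) / (a - d) := by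
    rw [div_add' _ _ _ hd0.ne', div_sub_one hd0.ne', div_div_div_cancel_right₀ hd0.ne', mul_comm]
  rw [hden, ← hval]
  exact hasSum_pnat_risingFactorial_div hx hδ

/-- Initialization of the backward induction: for `d ∈ (0,1)`, `α > -d`,
`k ≥ 1`, a nonnegative integer `B` and a real `a > d`,
`∑_{b=1}^∞ (α/d + B)_{(b)} / ((a+α)/d + B)_{(b)}` converges and equals `(α + dB)/(a - d)`. -/
theorem sum_risingFactorial_ratio_init (d α : ℝ) (hd : d ∈ Set.Ioo (0 : ℝ) 1)
    (hα : -d < α) (k : ℕ) (hk : 1 ≤ k) (B : ℕ) (a : ℝ) (ha : d < a) :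
    HasSum
      (fun b : ℕ+ =>
        risingFactorial (α / d + (B : ℝ)) (b : ℕ) /
          risingFactorial ((a + α) / d + (B : ℝ)) (b : ℕ))
      ((α + d * (B : ℝ)) / (a - d)) :=
  sum_risingFactorial_ratio_init_general d α hd hα B a ha
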